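/- Let C be an extended Choquet cone with an abundance of compact idempotents and let f ∈ Lsc(C). Then sup_{n∈ℕ} n·f = χ_{supp(f)}, i.e. for every x ∈ C, sup_n n·f(x) equals 0 if x ≤ supp(f) and equals ∞ otherwise. -/

import Mathlib

/-!
The zero set `Z = {f = 0}` of `f` is closed by lower semicontinuity and closed under addition,
hence upward directed; the upper sets `z + C` are closed, being continuous images of the compact
cone. Compactness then yields a greatest element of `Z`, which must be `supp f`. So `f` vanishes
exactly below `supp f`, and `n · f x` is either constantly `0` or unbounded.
-/

open scoped ENNReal NNReal

/-- The positive real numbers, used as scalars for cones. -/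
abbrev PosReal : Type := {t : ℝ // 0 < t}

/-- An extended Choquet cone: an algebraically ordered topological cone that is a lattice
under the algebraic order, with addition distributing over `⊓` and `⊔`, whose topology is
compact, Hausdorff and locally convex. -/
class ECCone (C : Type*) extends AddCommMonoid C, Lattice C, TopologicalSpace C where
  psmul : PosReal → C → C
  psmul_add : ∀ (t : PosReal) (x y : C), psmul t (x + y) = psmul t x + psmul t y
  add_psmul : ∀ (s t : PosReal) (x : C), psmul (s + t) x = psmul s x + psmul t x
  psmul_mul : ∀ (s t : PosReal) (x : C), psmul s (psmul t x) = psmul (s * t) x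
  one_psmul : ∀ x : C, psmul 1 x = x
  psmul_zero : ∀ t : PosReal, psmul t 0 = 0
  le_iff_exists_add : ∀ x y : C, x ≤ y ↔ ∃ z, x + z = y
  add_inf_distrib : ∀ x y z : C, x + (y ⊓ z) = (x + y) ⊓ (x + z)
  add_sup_distrib : ∀ x y z : C, x + (y ⊔ z) = (x + y) ⊔ (x + z)
  continuous_add' : Continuous fun p : C × C => p.1 + p.2
  continuous_psmul : Continuous fun p : PosReal × C => psmul p.1 p.2
  compact : CompactSpace C
  t2 : T2Space C
  locally_convex : ∀ (x : C) (U : Set C), IsOpen U → x ∈ U →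
    ∃ V : Set C, IsOpen V ∧ x ∈ V ∧ V ⊆ U ∧
      ∀ y ∈ V, ∀ z ∈ V, ∀ s t : PosReal, s.1 + t.1 = 1 → psmul s y + psmul t z ∈ V

/-- The way-below relation for functions into `[0,∞]`, relative to a set `S` of functions:
`f ≪ g` iff for every increasing sequence in `S` whose pointwise supremum dominates `g`,
some term of the sequence dominates `f`. -/
def FWayBelow {α : Type*} (S : Set (α → ℝ≥0∞)) (f g : α → ℝ≥0∞) : Prop :=
  ∀ h : ℕ → α → ℝ≥0∞, (∀ n, h n ∈ S) → Monotone h → (∀ a, g a ≤ ⨆ n, h n a) → ∃ n, f ≤ h n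

namespace ECCone

variable {C : Type*} [ECCone C]

/-- `w` is an idempotent: `2w = w`. -/
def IsIdem (w : C) : Prop := w + w = w

/-- `e` is the support idempotent of `x`: the maximum of `{z : x + z = x}`. -/
def IsSuppIdem (x e : C) : Prop := x + e = x ∧ ∀ z : C, x + z = x → z ≤ e

/-- `w₁ ≫ w₂` in the lattice of idempotents with the opposite order: whenever a nonempty
downward directed family of idempotents has an infimum `≤ w₂`, some member is `≤ w₁`. -/
def IdemWayBelow (w₁ w₂ : C) : Prop :=
  ∀ D : Set C, D.Nonempty → (∀ v ∈ D, IsIdem v) → DirectedOn (· ≥ ·) D →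
    ∀ m : C, IsGLB D m → m ≤ w₂ → ∃ v ∈ D, v ≤ w₁

/-- A compact idempotent: `w ≫ w`. -/
def IsCompactIdem (w : C) : Prop := IsIdem w ∧ IdemWayBelow w w

/-- `v` is compact relative to `w`: whenever a nonempty downward directed family of
idempotents has an infimum `≤ v`, some member `u` satisfies `u ⊓ w ≤ v`. -/
def CompactRelTo (v w : C) : Prop :=
  ∀ D : Set C, D.Nonempty → (∀ u ∈ D, IsIdem u) → DirectedOn (· ≥ ·) D →
    ∀ m : C, IsGLB D m → m ≤ v → ∃ u ∈ D, u ⊓ w ≤ v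

/-- `C` has an abundance of compact idempotents: every idempotent is an infimum
of compact idempotents. -/
def HasAbundantCompactIdem (C : Type*) [ECCone C] : Prop :=
  ∀ w : C, IsIdem w → ∃ D : Set C, (∀ v ∈ D, IsCompactIdem v) ∧ IsGLB D w

/-- `C` is strongly connected: `{x : x ≤ w}` is connected for every idempotent `w`. -/
def StronglyConnected (C : Type*) [ECCone C] : Prop :=
  ∀ w : C, IsIdem w → IsConnected {x : C | x ≤ w}

/-- A linear function on a cone: additive, homogeneous, sending `0` to `0`. -/
def IsLinFun (f : C → ℝ≥0∞) : Prop :=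
  f 0 = 0 ∧ (∀ x y : C, f (x + y) = f x + f y) ∧
    ∀ (t : PosReal) (x : C), f (psmul t x) = ENNReal.ofReal t.1 * f x

/-- Membership in `Lsc(C)`: linear and lower semicontinuous. -/
def MemLsc (f : C → ℝ≥0∞) : Prop := IsLinFun f ∧ LowerSemicontinuous f

/-- Membership in `Lsc_σ(C)`: in `Lsc(C)` and `f⁻¹((a,∞])` is σ-compact for all `a < ∞`. -/
def MemLscSigma (f : C → ℝ≥0∞) : Prop :=
  MemLsc f ∧ ∀ a : ℝ≥0, IsSigmaCompact {x : C | (a : ℝ≥0∞) < f x}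

/-- Membership in `A(C)`: linear and continuous. -/
def MemA (f : C → ℝ≥0∞) : Prop := IsLinFun f ∧ Continuous f

/-- `w = supp f`, the supremum of `{x : f x = 0}`. -/
def IsSupp (f : C → ℝ≥0∞) (w : C) : Prop := IsLUB {x : C | f x = 0} w

/-- The relation `f ◁ g`: `f ≤ (1-ε)g` for some `ε > 0`, and `f` is continuous at every
point where `g` is finite. -/
def Lhd (f g : C → ℝ≥0∞) : Prop :=
  (∃ ε : ℝ, 0 < ε ∧ ∀ x, f x ≤ ENNReal.ofReal (1 - ε) * g x) ∧
    ∀ x : C, g x ≠ ⊤ → ContinuousAt f x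

end ECCone

open Set

theorem IsClosed.exists_isGreatest_of_directedOn {X : Type*} [TopologicalSpace X]
    [CompactSpace X] [Preorder X] [ClosedIciTopology X] {s : Set X} (hs : IsClosed s)
    (hne : s.Nonempty) (hdir : DirectedOn (· ≤ ·) s) : ∃ p, IsGreatest s p := by
  have : Nonempty s := hne.to_subtype
  let tail : s → Set X := fun z => s ∩ Ici z.1
  have htail_closed (z : s) : IsClosed (tail z) := hs.inter isClosed_Ici
  have htail_dir : Directed (· ⊇ ·) tail := by
    rintro ⟨a, ha⟩ ⟨b, hb⟩
    obtain ⟨c, hc, hac, hbc⟩ := hdir a ha b hb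
    exact ⟨⟨c, hc⟩, fun y hy => ⟨hy.1, hac.trans hy.2⟩, fun y hy => ⟨hy.1, hbc.trans hy.2⟩⟩
  obtain ⟨p, hp⟩ := IsCompact.nonempty_iInter_of_directed_nonempty_isCompact_isClosed tail
    htail_dir (fun z => ⟨z.1, z.2, le_rfl⟩) (fun z => (htail_closed z).isCompact) htail_closed
  rw [mem_iInter] at hp
  exact ⟨p, (hp ⟨_, hne.some_mem⟩).1, fun z hz => (hp ⟨z, hz⟩).2⟩

namespace ECCone

attribute [local instance] ECCone.compact ECCone.t2

variable {C : Type*} [ECCone C]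

theorem Ici_eq_range_add (z : C) : Ici z = range (z + ·) := by
  ext y
  exact le_iff_exists_add z y

instance : ClosedIciTopology C where
  isClosed_Ici z := by
    rw [Ici_eq_range_add]
    exact (isCompact_range (continuous_add'.comp (Continuous.prodMk_right z))).isClosed

theorem monotone_of_map_add {f : C → ℝ≥0∞} (hadd : ∀ x y : C, f (x + y) = f x + f y) :
    Monotone f := by
  intro a b hab
  obtain ⟨z, rfl⟩ := (le_iff_exists_add a b).mp hab
  rw [hadd]
  exact le_self_add

theorem directedOn_zeroSet {f : C → ℝ≥0∞} (hadd : ∀ x y : C, f (x + y) = f x + f y) :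
    DirectedOn (· ≤ ·) {x : C | f x = 0} := by
  intro a ha b hb
  refine ⟨a + b, ?_, (le_iff_exists_add a _).mpr ⟨b, rfl⟩,
    (le_iff_exists_add b _).mpr ⟨a, add_comm b a⟩⟩
  simp only [mem_ofPred_eq, hadd, ha.out, hb.out, add_zero]

theorem MemLsc.isClosed_zeroSet {f : C → ℝ≥0∞} (hf : MemLsc f) :
    IsClosed {x : C | f x = 0} := by
  simpa only [Iic, nonpos_iff_eq_zero, preimage_ofPred_eq] using hf.2.isClosed_preimage 0

theorem MemLsc.apply_eq_zero_of_isSupp {f : C → ℝ≥0∞} (hf : MemLsc f) {w : C}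
    (hw : IsSupp f w) : f w = 0 := by
  obtain ⟨p, hp⟩ := hf.isClosed_zeroSet.exists_isGreatest_of_directedOn ⟨0, hf.1.1⟩
    (directedOn_zeroSet hf.1.2.1)
  rw [← hp.isLUB.unique hw]
  exact hp.1

theorem MemLsc.apply_eq_zero_iff_le_supp {f : C → ℝ≥0∞} (hf : MemLsc f) {w : C}
    (hw : IsSupp f w) {x : C} : f x = 0 ↔ x ≤ w := by
  refine ⟨fun hx => hw.1 hx, fun hxw => le_antisymm ?_ zero_le⟩
  calc f x ≤ f w := monotone_of_map_add hf.1.2.1 hxw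
    _ = 0 := hf.apply_eq_zero_of_isSupp hw

end ECCone

theorem stmt_8_general {C : Type*} [ECCone C]
    (f : C → ℝ≥0∞) (hf : ECCone.MemLsc f) (w : C) (hw : ECCone.IsSupp f w) :
    ∀ x : C, (x ≤ w → (⨆ n : ℕ, (n : ℝ≥0∞) * f x) = 0) ∧
      (¬ x ≤ w → (⨆ n : ℕ, (n : ℝ≥0∞) * f x) = ⊤) := by
  intro x
  rw [← ENNReal.iSup_mul, ENNReal.iSup_natCast, ← hf.apply_eq_zero_iff_le_supp hw]
  exact ⟨fun hx => by rw [hx, mul_zero], ENNReal.top_mul⟩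

/-- For `f ∈ Lsc(C)` on an extended Choquet cone with an abundance of
compact idempotents, `sup_n n·f = χ_{supp f}`. -/
theorem stmt_8 {C : Type*} [ECCone C] (habund : ECCone.HasAbundantCompactIdem C)
    (f : C → ℝ≥0∞) (hf : ECCone.MemLsc f) (w : C) (hw : ECCone.IsSupp f w) :
    ∀ x : C, (x ≤ w → (⨆ n : ℕ, (n : ℝ≥0∞) * f x) = 0) ∧
      (¬ x ≤ w → (⨆ n : ℕ, (n : ℝ≥0∞) * f x) = ⊤) :=
  stmt_8_general f hf w hw
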